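/- The lattice E6 ⊕ A1 ⊕ A1 ⊕ A1 cannot be embedded in the lattice H ⊕ E8; that is, there is no 10 × 9 integer matrix M such that Mᵀ · G(H ⊕ E8) · M equals the Gram matrix of E6 ⊕ 3A1. -/

import Mathlib

open Matrix

/-- Gram matrix of the ambient lattice (10 × 10). -/
def ambientGram : Matrix (Fin 10) (Fin 10) ℤ :=
  !![0, 1, 0, 0, 0, 0, 0, 0, 0, 0;
      1, 0, 0, 0, 0, 0, 0, 0, 0, 0;
      0, 0, -2, 1, 0, 0, 0, 0, 0, 0;
      0, 0, 1, -2, 1, 0, 0, 0, 0, 0;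
      0, 0, 0, 1, -2, 1, 0, 0, 0, 1;
      0, 0, 0, 0, 1, -2, 1, 0, 0, 0;
      0, 0, 0, 0, 0, 1, -2, 1, 0, 0;
      0, 0, 0, 0, 0, 0, 1, -2, 1, 0;
      0, 0, 0, 0, 0, 0, 0, 1, -2, 0;
      0, 0, 0, 0, 1, 0, 0, 0, 0, -2]

/-- Gram matrix of the root lattice to be embedded (9 × 9). -/
def rootGram : Matrix (Fin 9) (Fin 9) ℤ :=
  !![-2, 1, 0, 0, 0, 0, 0, 0, 0;
      1, -2, 1, 0, 0, 0, 0, 0, 0;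
      0, 1, -2, 1, 0, 1, 0, 0, 0;
      0, 0, 1, -2, 1, 0, 0, 0, 0;
      0, 0, 0, 1, -2, 0, 0, 0, 0;
      0, 0, 1, 0, 0, -2, 0, 0, 0;
      0, 0, 0, 0, 0, 0, -2, 0, 0;
      0, 0, 0, 0, 0, 0, 0, -2, 0;
      0, 0, 0, 0, 0, 0, 0, 0, -2]

/-!
Reduce a putative embedding `M` modulo 2. Since `H ⊕ E8` is unimodular its form stays
nondegenerate over `𝔽₂`, while `E6` has odd determinant 3, so the radical of `E6 ⊕ 3A1` mod 2 is
spanned by the three `A1` roots. If their images mod 2 were independent, `M` mod 2 would be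
injective, and its 9-dimensional image would contain a 3-dimensional subspace orthogonal to the
whole image, impossible inside a nondegenerate 10-dimensional space. Hence `M v ≡ 0 mod 2` for a
nonempty sum `v` of `A1` roots; as `H ⊕ E8` is even, `(M v)² ≡ 0 mod 8`, whereas `v² ∈ {-2, -4, -6}`.
-/

namespace Matrix

section Field

variable {K : Type*} [Field K] {n m k : Type*} [Fintype n] [DecidableEq n] [Fintype m] [Fintype k]

theorem exists_ne_zero_mulVec_mulVec_eq_zero {G : Matrix n n K} (hG : IsUnit G.det)
    {A : Matrix n m K} {R : Matrix m m K} {J : Matrix m k K} (hA : Aᵀ * G * A = R)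
    (hRJ : R * J = 0) (hrad : ∀ c, R *ᵥ c = 0 → ∃ y, J *ᵥ y = c)
    (hcard : Fintype.card n < Fintype.card m + Fintype.card k) :
    ∃ y ≠ 0, A *ᵥ (J *ᵥ y) = 0 := by
  by_contra! hAJ
  have hAJ_inj : Function.Injective (A * J).mulVecLin :=
    (injective_iff_map_eq_zero _).2 fun y hy ↦ by
      by_contra hy0
      exact hAJ y hy0 (by simpa [mulVec_mulVec] using hy)
  have hA_inj : Function.Injective A.mulVecLin := by
    refine (injective_iff_map_eq_zero _).2 fun c hc ↦ ?_
    have hc : A *ᵥ c = 0 := hc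
    obtain ⟨y, rfl⟩ := hrad c (by rw [← hA, ← mulVec_mulVec, hc, mulVec_zero])
    by_contra hy0
    exact hAJ y (fun h ↦ hy0 (by rw [h, mulVec_zero])) hc
  have hsylvester := rank_add_rank_le_card_of_mul_eq_zero (A := Aᵀ * G) (B := A * J)
    (by rw [← Matrix.mul_assoc, hA, hRJ])
  rw [rank_mul_eq_left_of_isUnit_det G _ hG, rank_transpose, rank, rank,
    LinearMap.finrank_range_of_inj hA_inj, LinearMap.finrank_range_of_inj hAJ_inj,
    Module.finrank_fintype_fun_eq_card, Module.finrank_fintype_fun_eq_card] at hsylvester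
  omega

end Field

section Int

variable {n m : Type*} [Fintype n] [Fintype m]

theorem even_dotProduct_mulVec_self {G : Matrix n n ℤ} (hG : G.IsSymm)
    (hdiag : ∀ i, Even (G i i)) (x : n → ℤ) : Even (x ⬝ᵥ G *ᵥ x) := by
  rw [← ZMod.intCast_eq_zero_iff_even]
  have hsum : ((x ⬝ᵥ G *ᵥ x : ℤ) : ZMod 2) =
      ∑ p : n × n, ((x p.1 * G p.1 p.2 * x p.2 : ℤ) : ZMod 2) := by
    simp only [dotProduct, mulVec, Finset.mul_sum, Fintype.sum_prod_type, Int.cast_sum, mul_assoc]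
  rw [hsum]
  -- the swap pairs off the off-diagonal terms, which cancel in characteristic 2
  refine Finset.sum_ninvolution Prod.swap (fun p ↦ ?_) (fun p hp hswap ↦ hp ?_)
    (fun p ↦ Finset.mem_univ _) Prod.swap_swap
  · rw [Prod.fst_swap, Prod.snd_swap, hG.apply p.1 p.2, ← Int.cast_add,
      ZMod.intCast_zmod_eq_zero_iff_dvd]
    exact ⟨x p.1 * G p.1 p.2 * x p.2, by ring⟩
  · obtain ⟨i, j⟩ := p
    obtain rfl : j = i := congrArg Prod.fst hswap
    obtain ⟨r, hr⟩ := hdiag j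
    rw [ZMod.intCast_zmod_eq_zero_iff_dvd]
    exact ⟨x j * r * x j, by rw [hr]; ring⟩

theorem eight_dvd_dotProduct_mulVec_self {G : Matrix n n ℤ}
    (hG : ∀ x, Even (x ⬝ᵥ G *ᵥ x)) {x : n → ℤ} (hx : ∀ i, 2 ∣ x i) : 8 ∣ x ⬝ᵥ G *ᵥ x := by
  choose b hb using hx
  obtain ⟨r, hr⟩ := hG b
  obtain rfl : x = (2 : ℤ) • b := funext hb
  rw [mulVec_smul, dotProduct_smul, smul_dotProduct, hr]
  exact ⟨r, by simp only [smul_eq_mul]; ring⟩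

theorem dotProduct_mulVec_transpose_mul_mul {R : Type*} [CommSemiring R] (G : Matrix n n R)
    (M : Matrix n m R) (v : m → R) :
    v ⬝ᵥ (Mᵀ * G * M) *ᵥ v = (M *ᵥ v) ⬝ᵥ G *ᵥ (M *ᵥ v) := by
  rw [← mulVec_mulVec, ← mulVec_mulVec, dotProduct_mulVec, vecMul_transpose]

end Int

end Matrix

theorem isUnit_det_ambientGram : IsUnit ambientGram.det :=
  isUnit_det_of_right_inverse (B := !![0, 1, 0, 0, 0, 0, 0, 0, 0, 0;
      1, 0, 0, 0, 0, 0, 0, 0, 0, 0;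
      0, 0, -4, -7, -10, -8, -6, -4, -2, -5;
      0, 0, -7, -14, -20, -16, -12, -8, -4, -10;
      0, 0, -10, -20, -30, -24, -18, -12, -6, -15;
      0, 0, -8, -16, -24, -20, -15, -10, -5, -12;
      0, 0, -6, -12, -18, -15, -12, -8, -4, -9;
      0, 0, -4, -8, -12, -10, -8, -6, -3, -6;
      0, 0, -2, -4, -6, -5, -4, -3, -2, -3;
      0, 0, -5, -10, -15, -12, -9, -6, -3, -8]) (by decide)

theorem isSymm_ambientGram : ambientGram.IsSymm := by
  decide

theorem even_ambientGram_diag : ∀ i, Even (ambientGram i i) := by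
  decide

def threeA1Incl : Matrix (Fin 9) (Fin 3) ℤ :=
  !![0, 0, 0; 0, 0, 0; 0, 0, 0; 0, 0, 0; 0, 0, 0; 0, 0, 0; 1, 0, 0; 0, 1, 0; 0, 0, 1]

theorem rootGram_mul_threeA1Incl_mod_two :
    rootGram.map (Int.castRingHom (ZMod 2)) * threeA1Incl.map (Int.castRingHom (ZMod 2)) = 0 := by
  decide

theorem exists_threeA1Incl_mulVec_of_rootGram_mulVec_mod_two (c : Fin 9 → ZMod 2)
    (hc : rootGram.map (Int.castRingHom (ZMod 2)) *ᵥ c = 0) :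
    ∃ y, threeA1Incl.map (Int.castRingHom (ZMod 2)) *ᵥ y = c := by
  set J := threeA1Incl.map (Int.castRingHom (ZMod 2))
  -- `P` is the mod-2 inverse of the E6 block of `rootGram`, which exists since det E6 = 3
  set P : Matrix (Fin 9) (Fin 9) (ZMod 2) := !![0, 1, 0, 0, 0, 1, 0, 0, 0;
      1, 0, 0, 0, 0, 0, 0, 0, 0;
      0, 0, 0, 0, 0, 1, 0, 0, 0;
      0, 0, 0, 0, 1, 0, 0, 0, 0;
      0, 0, 0, 1, 0, 1, 0, 0, 0;
      1, 0, 1, 0, 1, 0, 0, 0, 0;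
      0, 0, 0, 0, 0, 0, 0, 0, 0;
      0, 0, 0, 0, 0, 0, 0, 0, 0;
      0, 0, 0, 0, 0, 0, 0, 0, 0]
  have hsplit : J * Jᵀ + P * rootGram.map (Int.castRingHom (ZMod 2)) = 1 := by decide
  refine ⟨Jᵀ *ᵥ c, ?_⟩
  calc J *ᵥ (Jᵀ *ᵥ c) = (J * Jᵀ + P * rootGram.map (Int.castRingHom (ZMod 2))) *ᵥ c := by
        rw [add_mulVec, ← mulVec_mulVec c P, hc, mulVec_zero, add_zero, mulVec_mulVec]
    _ = c := by rw [hsplit, one_mulVec]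

-- the vector is a nonempty sum of orthogonal roots of `3A1`, so its norm is -2, -4 or -6
theorem not_eight_dvd_rootGram_threeA1Incl (y : Fin 3 → ZMod 2) (hy : y ≠ 0) :
    ¬ 8 ∣ (threeA1Incl *ᵥ fun j ↦ ((y j).val : ℤ)) ⬝ᵥ
      rootGram *ᵥ (threeA1Incl *ᵥ fun j ↦ ((y j).val : ℤ)) := by
  revert y
  decide

theorem stmt_11 :
    ¬ ∃ M : Matrix (Fin 10) (Fin 9) ℤ,
      Mᵀ * ambientGram * M = rootGram := by
  rintro ⟨M, hM⟩
  set π := Int.castRingHom (ZMod 2)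
  have hM2 : (M.map π)ᵀ * ambientGram.map π * M.map π = rootGram.map π := by
    rw [← hM, Matrix.map_mul, Matrix.map_mul, transpose_map]
  have hG2 : IsUnit (ambientGram.map π).det := by
    have h := isUnit_det_ambientGram.map π
    rwa [RingHom.map_det] at h
  obtain ⟨y, hy0, hy⟩ := exists_ne_zero_mulVec_mulVec_eq_zero hG2 hM2
    rootGram_mul_threeA1Incl_mod_two exists_threeA1Incl_mulVec_of_rootGram_mulVec_mod_two
    (by decide)
  set v := threeA1Incl *ᵥ fun j ↦ ((y j).val : ℤ)
  have hlift : (π ∘ fun j ↦ ((y j).val : ℤ)) = y := funext fun j ↦ by simp [π]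
  have hv_mod_two : π ∘ v = threeA1Incl.map π *ᵥ y := funext fun j ↦ by
    rw [Function.comp_apply, RingHom.map_mulVec, hlift]
  have hv : ∀ i, 2 ∣ (M *ᵥ v) i := fun i ↦ by
    refine (ZMod.intCast_zmod_eq_zero_iff_dvd _ 2).mp ?_
    change π _ = 0
    rw [RingHom.map_mulVec, hv_mod_two, hy, Pi.zero_apply]
  apply not_eight_dvd_rootGram_threeA1Incl y hy0
  rw [← hM, dotProduct_mulVec_transpose_mul_mul]
  exact eight_dvd_dotProduct_mulVec_self
    (even_dotProduct_mulVec_self isSymm_ambientGram even_ambientGram_diag) hv
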